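/- arXiv:2301.01027 — 6 statements merged into one kernel-verified Lean document; each statement's English description precedes it below -/
import Mathlib

section
/- Let B be a finitely generated torsion-free abelian group, let n ≥ 1, and let σ : B × B → ℤ/nℤ be a normalized 2-cocycle. Then there exists a function φ : B → ℤ/nℤ such that the function β defined by β(b₁,b₂) = σ(b₁,b₂) − φ(b₁b₂) + φ(b₁) + φ(b₂) is a bicharacter, i.e. β(b₁b₁′, b₂) = β(b₁,b₂) + β(b₁′,b₂) and β(b₁, b₂b₂′) = β(b₁,b₂) + β(b₁,b₂′) for all b₁, b₁′, b₂, b₂′ ∈ B. -/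
/-!
The antisymmetrization `f u v - f v u` of a cocycle on an abelian group `V` is the commutator
pairing of the corresponding central extension, an alternating bilinear form. When `V` is free,
every alternating form is `Q - Qᵀ` for a bilinear `Q` (the upper triangular part with respect to an
ordered basis), so `f - Q` is a symmetric cocycle. A symmetric cocycle defines an abelian extension
of `V`, which splits since `V` is free, and a splitting exhibits `f - Q` as a coboundary.
-/

section

variable {V A : Type*} [AddCommGroup V] [AddCommGroup A]

def IsTwoCocycle (f : V → V → A) : Prop :=
  ∀ u v w, f u v + f (u + v) w = f v w + f u (v + w)

theorem LinearMap.isTwoCocycle (Q : V →ₗ[ℤ] V →ₗ[ℤ] A) : IsTwoCocycle fun u v => Q u v := by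
  intro u v w
  simp only [map_add, LinearMap.add_apply]
  abel

namespace IsTwoCocycle

variable {f g : V → V → A}

theorem sub (hf : IsTwoCocycle f) (hg : IsTwoCocycle g) : IsTwoCocycle (f - g) := by
  intro u v w
  simp only [Pi.sub_apply]
  linear_combination (norm := abel) hf u v w - hg u v w

section Commutator

variable (hf : IsTwoCocycle f)
include hf

theorem antisymm_add_left (u v w : V) :
    f (u + v) w - f w (u + v) = (f u w - f w u) + (f v w - f w v) := by
  have h₁ := hf u v w
  have h₂ := hf u w v
  have h₃ := hf w u v
  rw [add_comm w u] at h₃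
  rw [add_comm w v] at h₂
  linear_combination (norm := abel) h₁ + h₃ - h₂

theorem antisymm_add_right (u v w : V) :
    f u (v + w) - f (v + w) u = (f u v - f v u) + (f u w - f w u) := by
  rw [← neg_sub, hf.antisymm_add_left]
  abel

def commutatorPairing : V →ₗ[ℤ] V →ₗ[ℤ] A :=
  LinearMap.mk₂ ℤ (fun u v => f u v - f v u) hf.antisymm_add_left
    (fun c u v => map_zsmul
      (AddMonoidHom.mk' (fun u => f u v - f v u) fun u u' => hf.antisymm_add_left u u' v) c u)
    hf.antisymm_add_right
    (fun c u v => map_zsmul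
      (AddMonoidHom.mk' (fun v => f u v - f v u) fun v v' => hf.antisymm_add_right u v v') c v)

theorem isAlt_commutatorPairing : hf.commutatorPairing.IsAlt := fun v => sub_self (f v v)

end Commutator

end IsTwoCocycle

theorem LinearMap.IsAlt.exists_sub_flip_eq {R M N : Type*} [CommRing R] [AddCommGroup M]
    [Module R M] [Module.Free R M] [AddCommGroup N] [Module R N] {a : M →ₗ[R] M →ₗ[R] N}
    (ha : a.IsAlt) : ∃ Q : M →ₗ[R] M →ₗ[R] N, Q - Q.flip = a := by
  let b := Module.Free.chooseBasis R M
  let _ : LinearOrder (Module.Free.ChooseBasisIndex R M) := WellOrderingRel.isWellOrder.linearOrder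
  refine ⟨b.constr R fun i => b.constr R fun j => if i < j then a (b i) (b j) else 0,
    LinearMap.ext_basis b b fun i j => ?_⟩
  simp only [LinearMap.sub_apply, LinearMap.flip_apply, Module.Basis.constr_basis]
  rcases lt_trichotomy i j with h | rfl | h
  · rw [if_pos h, if_neg h.not_gt, sub_zero]
  · simp [ha.self_eq_zero]
  · rw [if_neg h.not_gt, if_pos h, zero_sub, ha.neg]

/-- The group laws need hypotheses on `f`, so the group structure is the definition
`CocycleExtension.addCommGroup` rather than an instance. -/
@[ext]
structure CocycleExtension (f : V → V → A) where
  fst : A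
  snd : V

namespace CocycleExtension

variable {f : V → V → A}

instance : Add (CocycleExtension f) := ⟨fun x y => ⟨x.fst + y.fst + f x.snd y.snd, x.snd + y.snd⟩⟩
instance : Zero (CocycleExtension f) := ⟨⟨0, 0⟩⟩
instance : Neg (CocycleExtension f) := ⟨fun x => ⟨-x.fst - f x.snd (-x.snd), -x.snd⟩⟩

@[simp] theorem fst_add (x y : CocycleExtension f) :
    (x + y).fst = x.fst + y.fst + f x.snd y.snd := rfl
@[simp] theorem snd_add (x y : CocycleExtension f) : (x + y).snd = x.snd + y.snd := rfl
@[simp] theorem fst_zero : (0 : CocycleExtension f).fst = 0 := rfl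
@[simp] theorem snd_zero : (0 : CocycleExtension f).snd = 0 := rfl
@[simp] theorem fst_neg (x : CocycleExtension f) : (-x).fst = -x.fst - f x.snd (-x.snd) := rfl
@[simp] theorem snd_neg (x : CocycleExtension f) : (-x).snd = -x.snd := rfl

abbrev addCommGroup (hf : IsTwoCocycle f) (hf₀ : ∀ v, f v 0 = 0) (h₀f : ∀ v, f 0 v = 0)
    (hsymm : ∀ u v, f u v = f v u) : AddCommGroup (CocycleExtension f) where
  add_assoc x y z := by
    ext
    · simp only [fst_add, snd_add]
      linear_combination (norm := abel) hf x.snd y.snd z.snd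
    · exact add_assoc x.snd y.snd z.snd
  zero_add x := by ext <;> simp [h₀f]
  add_zero x := by ext <;> simp [hf₀]
  add_comm x y := by ext <;> simp [add_comm x.fst, add_comm x.snd, hsymm x.snd]
  neg_add_cancel x := by
    ext
    · simp only [fst_add, fst_neg, snd_neg, fst_zero, hsymm (-x.snd)]
      abel
    · simp
  nsmul := nsmulRec
  zsmul := zsmulRec

end CocycleExtension

namespace IsTwoCocycle

variable {f : V → V → A}

theorem exists_eq_coboundary_of_symm [Module.Projective ℤ V] (hf : IsTwoCocycle f)
    (hf₀ : ∀ v, f v 0 = 0) (h₀f : ∀ v, f 0 v = 0) (hsymm : ∀ u v, f u v = f v u) :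
    ∃ φ : V → A, ∀ u v, f u v = φ (u + v) - φ u - φ v := by
  let _ := CocycleExtension.addCommGroup hf hf₀ h₀f hsymm
  let π : CocycleExtension f →ₗ[ℤ] V :=
    (AddMonoidHom.mk' CocycleExtension.snd fun _ _ => rfl).toIntLinearMap
  obtain ⟨s, hs⟩ := Module.projective_lifting_property π LinearMap.id fun v => ⟨⟨0, v⟩, rfl⟩
  have hsnd (v : V) : (s v).snd = v := LinearMap.congr_fun hs v
  have hadd (u v : V) : (s (u + v)).fst = (s u).fst + (s v).fst + f u v := by
    rw [map_add, CocycleExtension.fst_add, hsnd, hsnd]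
  refine ⟨fun v => (s v).fst, fun u v => ?_⟩
  show f u v = (s (u + v)).fst - (s u).fst - (s v).fst
  rw [hadd]
  abel

theorem exists_bilinear_cohomologous [Module.Free ℤ V] (hf : IsTwoCocycle f)
    (hf₀ : ∀ v, f v 0 = 0) (h₀f : ∀ v, f 0 v = 0) :
    ∃ φ : V → A, ∃ Q : V →ₗ[ℤ] V →ₗ[ℤ] A, ∀ u v, f u v - φ (u + v) + φ u + φ v = Q u v := by
  obtain ⟨Q, hQ⟩ := hf.isAlt_commutatorPairing.exists_sub_flip_eq
  have hsymm (u v : V) : f u v - Q u v = f v u - Q v u := by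
    rw [sub_eq_sub_iff_sub_eq_sub]
    exact (LinearMap.congr_fun₂ hQ u v).symm
  obtain ⟨φ, hφ⟩ := exists_eq_coboundary_of_symm (hf.sub Q.isTwoCocycle)
    (fun v => by simp [hf₀]) (fun v => by simp [h₀f]) hsymm
  refine ⟨φ, Q, fun u v => ?_⟩
  have := hφ u v
  simp only [Pi.sub_apply] at this
  linear_combination (norm := abel) this

end IsTwoCocycle

end

theorem stmt1_general {B : Type*} [CommGroup B] (hfg : Group.FG B)
    (htf : ∀ b : B, b ≠ 1 → ¬ IsOfFinOrder b)
    (n : ℕ) (σ : B → B → ZMod n)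
    (hcoc : ∀ b₁ b₂ b₃ : B, σ b₁ b₂ + σ (b₁ * b₂) b₃ = σ b₂ b₃ + σ b₁ (b₂ * b₃))
    (hnorm₁ : ∀ b : B, σ b 1 = 0) (hnorm₂ : ∀ b : B, σ 1 b = 0) :
    ∃ φ : B → ZMod n, ∀ β : B → B → ZMod n,
      (∀ b₁ b₂ : B, β b₁ b₂ = σ b₁ b₂ - φ (b₁ * b₂) + φ b₁ + φ b₂) →
      (∀ b₁ b₁' b₂ : B, β (b₁ * b₁') b₂ = β b₁ b₂ + β b₁' b₂) ∧
      (∀ b₁ b₂ b₂' : B, β b₁ (b₂ * b₂') = β b₁ b₂ + β b₁ b₂') := by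
  have : IsMulTorsionFree B := isMulTorsionFree_iff_not_isOfFinOrder.mpr htf
  have : Module.Finite ℤ (Additive B) :=
    Module.Finite.iff_addGroup_fg.mpr (GroupFG.iff_add_fg.mp hfg)
  obtain ⟨φ, Q, hQ⟩ := IsTwoCocycle.exists_bilinear_cohomologous
    (f := fun u v : Additive B => σ u.toMul v.toMul) (fun _ _ _ => hcoc _ _ _)
    (fun _ => hnorm₁ _) (fun _ => hnorm₂ _)
  refine ⟨fun b => φ (.ofMul b), fun β hβ => ?_⟩
  have hβQ (b₁ b₂ : B) : β b₁ b₂ = Q (.ofMul b₁) (.ofMul b₂) := by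
    rw [hβ]
    exact hQ _ _
  constructor <;> intros <;> simp only [hβQ, ofMul_mul, map_add, LinearMap.add_apply]

/-- Let `B` be a finitely generated torsion-free abelian group, `n ≥ 1`,
and `σ : B × B → ℤ/nℤ` a normalized 2-cocycle.  Then there is `φ : B → ℤ/nℤ` such that
`β(b₁,b₂) = σ(b₁,b₂) − φ(b₁b₂) + φ(b₁) + φ(b₂)` is a bicharacter. -/
theorem stmt1 {B : Type*} [CommGroup B] (hfg : Group.FG B)
    (htf : ∀ b : B, b ≠ 1 → ¬ IsOfFinOrder b)
    (n : ℕ) (hn : 1 ≤ n) (σ : B → B → ZMod n)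
    (hcoc : ∀ b₁ b₂ b₃ : B, σ b₁ b₂ + σ (b₁ * b₂) b₃ = σ b₂ b₃ + σ b₁ (b₂ * b₃))
    (hnorm₁ : ∀ b : B, σ b 1 = 0) (hnorm₂ : ∀ b : B, σ 1 b = 0) :
    ∃ φ : B → ZMod n, ∀ β : B → B → ZMod n,
      (∀ b₁ b₂ : B, β b₁ b₂ = σ b₁ b₂ - φ (b₁ * b₂) + φ b₁ + φ b₂) →
      (∀ b₁ b₁' b₂ : B, β (b₁ * b₁') b₂ = β b₁ b₂ + β b₁' b₂) ∧
      (∀ b₁ b₂ b₂' : B, β b₁ (b₂ * b₂') = β b₁ b₂ + β b₁ b₂') :=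
  stmt1_general hfg htf n σ hcoc hnorm₁ hnorm₂
end

section
/- Let 𝔄 be a C*-algebra and let S ⊆ 𝔄 be a star subalgebra. Then every nonzero closed two-sided ideal of 𝔄 has nonzero intersection with S if and only if for every C*-algebra B, every *-homomorphism π : 𝔄 → B whose restriction to S is injective is isometric on all of 𝔄. -/
/-!
If every nonzero closed ideal meets `S`, the kernel of a *-homomorphism that is injective on `S`
is a closed ideal meeting `S` only in `0`, hence zero, and injective *-homomorphisms between
C*-algebras are isometric. Conversely, a nonzero closed ideal `I` with `I ∩ S = 0` makes the
quotient map `𝔄 → 𝔄 ⧸ I` injective on `S` without being isometric.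

The work lies in making `𝔄 ⧸ I` a C*-algebra. For `b` with `b⋆b ∈ I`, the element
`f = δ (b⋆b + δ)⁻¹` satisfies `1 - f ∈ I`, `‖f‖ ≤ 1` and `‖b f‖² ≤ δ`. Approximating `a⋆` by
`a⋆ (1 - f) ∈ I` shows that closed ideals are self-adjoint, and multiplying a near-optimal lift
of `[a⋆a]` by `f` on both sides gives the C*-identity for the quotient norm.
-/

open Filter Topology

theorem norm_star_mul_mul_le {R : Type*} [NonUnitalNormedRing R] [StarRing R] [NormedStarGroup R]
    {f : R} (hf : ‖f‖ ≤ 1) (m : R) : ‖star f * m * f‖ ≤ ‖m‖ := by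
  grw [norm_mul_le, norm_mul_le, norm_star, hf, hf, one_mul, mul_one]

namespace Ideal

variable {A : Type*} [CStarAlgebra A] {I : Ideal A} [I.IsTwoSided]

theorem exists_one_sub_mem_norm_mul_star_mul_self_mul_le {b : A} (hb : star b * b ∈ I)
    {δ : ℝ} (hδ : 0 < δ) :
    ∃ f : A, IsSelfAdjoint f ∧ 1 - f ∈ I ∧ ‖f‖ ≤ 1 ∧ ‖f * (star b * b) * f‖ ≤ δ := by
  set c := star b * b
  have hspec : ∀ t ∈ spectrum ℝ c, 0 ≤ t := fun t ht => spectrum_star_mul_self_nonneg t ht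
  have hinv : ContinuousOn (fun t : ℝ => (t + δ)⁻¹) (spectrum ℝ c) :=
    ContinuousOn.inv₀ (by fun_prop) fun t ht => by linarith [hspec t ht]
  set g : ℝ → ℝ := fun t => δ * (t + δ)⁻¹
  have hg : ContinuousOn g (spectrum ℝ c) := continuousOn_const.mul hinv
  have hg_mem_Icc : ∀ t ∈ spectrum ℝ c, 0 ≤ g t ∧ g t ≤ 1 := fun t ht => by
    have := hspec t ht
    exact ⟨by positivity, by rw [mul_inv_le_iff₀ (by positivity)]; linarith⟩
  refine ⟨cfc g c, cfc_predicate _ c, ?_, ?_, ?_⟩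
  · have : 1 - cfc g c = c * cfc (fun t : ℝ => (t + δ)⁻¹) c :=
      calc 1 - cfc g c = cfc (fun t => 1 - g t) c := by
            rw [cfc_sub _ _ c (by fun_prop) hg, cfc_const_one ℝ c]
        _ = cfc (fun t => t * (t + δ)⁻¹) c := cfc_congr fun t ht => by
            have := hspec t ht
            simp only [g]
            field_simp
            ring
        _ = c * cfc (fun t : ℝ => (t + δ)⁻¹) c := by
            rw [cfc_mul (fun t => t) _ c (by fun_prop) hinv, cfc_id' ℝ c]
    rw [this]
    exact I.mul_mem_right _ hb
  · refine norm_cfc_le zero_le_one fun t ht => ?_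
    rw [Real.norm_of_nonneg (hg_mem_Icc t ht).1]
    exact (hg_mem_Icc t ht).2
  · have : cfc g c * c * cfc g c = cfc (fun t => g t * t * g t) c := by
      rw [cfc_mul (fun t => g t * t) g c (hg.mul (by fun_prop)) hg,
        cfc_mul g (fun t => t) c hg (by fun_prop), cfc_id' ℝ c]
    rw [this]
    refine norm_cfc_le hδ.le fun t ht => ?_
    have := hspec t ht
    obtain ⟨hg0, hg1⟩ := hg_mem_Icc t ht
    have hgt : g t * t ≤ δ := by
      simp only [g]
      rw [mul_assoc, mul_le_iff_le_one_right hδ, inv_mul_le_iff₀ (by positivity)]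
      linarith
    rw [Real.norm_of_nonneg (by positivity)]
    nlinarith

theorem exists_one_sub_mem_norm_mul_le {b : A} (hb : star b * b ∈ I) {ε : ℝ} (hε : 0 < ε) :
    ∃ f : A, 1 - f ∈ I ∧ ‖f‖ ≤ 1 ∧ ‖b * f‖ ≤ ε := by
  obtain ⟨f, hf, hfI, hf1, hbf⟩ :=
    exists_one_sub_mem_norm_mul_star_mul_self_mul_le hb (pow_pos hε 2)
  refine ⟨f, hfI, hf1, (sq_le_sq₀ (norm_nonneg _) hε.le).mp ?_⟩
  calc ‖b * f‖ ^ 2 = ‖f * (star b * b) * f‖ := by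
        rw [sq, ← CStarRing.norm_star_mul_self, star_mul, hf.star_eq]
        noncomm_ring
    _ ≤ ε ^ 2 := hbf

theorem star_mem_of_isClosed (hI : IsClosed (I : Set A)) {a : A} (ha : a ∈ I) : star a ∈ I := by
  refine hI.closure_subset (Metric.mem_closure_iff.mpr fun ε hε => ?_)
  obtain ⟨f, hfI, -, hf⟩ := exists_one_sub_mem_norm_mul_le (b := star a)
    (by simpa using I.mul_mem_right (star a) ha) (half_pos hε)
  refine ⟨star a * (1 - f), I.mul_mem_left _ hfI, ?_⟩
  rw [dist_eq_norm, mul_sub, mul_one, sub_sub_cancel]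
  exact hf.trans_lt (half_lt_self hε)

end Ideal

namespace Ideal.Quotient

section SeminormedRing

variable {R : Type*} [SeminormedRing R] (I : Ideal R) [I.IsTwoSided]

theorem norm_mul_le_of_isTwoSided (x y : R ⧸ I) : ‖x * y‖ ≤ ‖x‖ * ‖y‖ := by
  have hlim : Tendsto (fun δ : ℝ => (‖x‖ + δ) * (‖y‖ + δ)) (𝓝[>] 0) (𝓝 (‖x‖ * ‖y‖)) := by
    have : Continuous fun δ : ℝ => (‖x‖ + δ) * (‖y‖ + δ) := by fun_prop
    simpa using this.continuousWithinAt.tendsto (s := Set.Ioi 0) (x := 0)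
  refine ge_of_tendsto hlim (eventually_nhdsWithin_of_forall fun δ (hδ : 0 < δ) => ?_)
  obtain ⟨a, rfl, ha⟩ := Submodule.Quotient.norm_mk_lt x hδ
  obtain ⟨b, rfl, hb⟩ := Submodule.Quotient.norm_mk_lt y hδ
  calc ‖mk I a * mk I b‖ ≤ ‖a * b‖ := Submodule.Quotient.norm_mk_le I (a * b)
    _ ≤ ‖a‖ * ‖b‖ := norm_mul_le a b
    _ ≤ _ := mul_le_mul ha.le hb.le (norm_nonneg _) (by positivity)

noncomputable instance instSeminormedRing : SeminormedRing (R ⧸ I) :=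
  { Ideal.Quotient.ring I, Submodule.Quotient.seminormedAddCommGroup I with
    dist_eq := dist_eq_norm_neg_add
    norm_mul_le := norm_mul_le_of_isTwoSided I }

noncomputable instance instNormedRing [IsClosed (I : Set R)] : NormedRing (R ⧸ I) :=
  { instSeminormedRing I, Submodule.Quotient.normedAddCommGroup I with }

noncomputable instance instNormedAlgebra (𝕜 : Type*) [NormedField 𝕜] [NormedAlgebra 𝕜 R] :
    NormedAlgebra 𝕜 (R ⧸ I) :=
  { Submodule.Quotient.normedSpace I 𝕜, Ideal.Quotient.algebra 𝕜 with }

end SeminormedRing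

section CStarAlgebra

variable {A : Type*} [CStarAlgebra A] (I : Ideal A) [I.IsTwoSided] [hI : IsClosed (I : Set A)]

instance instStar : Star (A ⧸ I) where
  star := Quotient.map' star fun a b hab => (Submodule.quotientRel_def I).mpr <| by
    simpa only [star_sub] using I.star_mem_of_isClosed hI ((Submodule.quotientRel_def I).mp hab)

theorem mk_star (a : A) : mk I (star a) = star (mk I a) := rfl

instance instStarRing : StarRing (A ⧸ I) where
  star_involutive x := by
    obtain ⟨a, rfl⟩ := mk_surjective x
    rw [← mk_star, ← mk_star, star_star]
  star_mul x y := by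
    obtain ⟨a, rfl⟩ := mk_surjective x
    obtain ⟨b, rfl⟩ := mk_surjective y
    rw [← map_mul, ← mk_star, ← mk_star, ← mk_star, star_mul, map_mul]
  star_add x y := by
    obtain ⟨a, rfl⟩ := mk_surjective x
    obtain ⟨b, rfl⟩ := mk_surjective y
    rw [← map_add, ← mk_star, ← mk_star, ← mk_star, star_add, map_add]

instance instStarModule : StarModule ℂ (A ⧸ I) where
  star_smul c x := by
    obtain ⟨a, rfl⟩ := mk_surjective x
    show mk I (star (c • a)) = star c • mk I (star a)
    rw [star_smul]
    rfl

theorem norm_mul_self_le_norm_star_mul_self (x : A ⧸ I) : ‖x‖ * ‖x‖ ≤ ‖star x * x‖ := by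
  obtain ⟨a, rfl⟩ := mk_surjective x
  refine le_of_forall_pos_lt_add fun ε hε => ?_
  obtain ⟨m, hm, hm_lt⟩ := Submodule.Quotient.norm_mk_lt (mk I (star a * a)) (half_pos hε)
  set b := m - star a * a
  have hbI : b ∈ I := (mk_eq_mk_iff_sub_mem _ _).mp hm
  obtain ⟨f, hfI, hf1, hbf⟩ :=
    exists_one_sub_mem_norm_mul_le (I.mul_mem_left (star b) hbI) (half_pos hε)
  have hmk : mk I (a * f) = mk I a := by
    rw [mk_eq_mk_iff_sub_mem, show a * f - a = -(a * (1 - f)) by noncomm_ring]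
    exact I.neg_mem (I.mul_mem_left _ hfI)
  calc ‖mk I a‖ * ‖mk I a‖ ≤ ‖a * f‖ * ‖a * f‖ := by
        rw [← hmk]
        gcongr <;> exact Submodule.Quotient.norm_mk_le I _
    _ = ‖star f * m * f - star f * (b * f)‖ := by
        rw [← CStarRing.norm_star_mul_self]
        congr 1
        simp only [b, star_mul]
        noncomm_ring
    _ ≤ ‖m‖ + ‖b * f‖ := by
        grw [norm_sub_le, norm_star_mul_mul_le hf1, norm_mul_le, norm_star, hf1, one_mul]
    _ < ‖star (mk I a) * mk I a‖ + ε := by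
        rw [← mk_star, ← map_mul]
        linarith

instance instCStarRing : CStarRing (A ⧸ I) :=
  ⟨norm_mul_self_le_norm_star_mul_self I⟩

noncomputable instance instCStarAlgebra : CStarAlgebra (A ⧸ I) where

def mkStarAlgHom : A →⋆ₐ[ℂ] A ⧸ I :=
  { mkₐ ℂ I with map_star' := mk_star I }

end CStarAlgebra

end Ideal.Quotient

open scoped CStarAlgebra in
theorem StarAlgHom.isClosed_ker {A B : Type*} [CStarAlgebra A] [CStarAlgebra B]
    (π : A →⋆ₐ[ℂ] B) : IsClosed (TwoSidedIdeal.ker π : Set A) :=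
  isClosed_singleton.preimage (map_continuous π)

/-- For a C*-algebra `𝔄` and a star subalgebra `S ⊆ 𝔄`: every nonzero
closed two-sided ideal of `𝔄` has nonzero intersection with `S` if and only if every
*-homomorphism from `𝔄` into a C*-algebra whose restriction to `S` is injective is
isometric on all of `𝔄`. -/
theorem stmt4 {𝔄 : Type u} [CStarAlgebra 𝔄] (S : StarSubalgebra ℂ 𝔄) :
    (∀ I : TwoSidedIdeal 𝔄, IsClosed (I : Set 𝔄) → I ≠ ⊥ →
      ∃ x : 𝔄, x ∈ I ∧ x ∈ S ∧ x ≠ 0)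
      ↔
    (∀ (B : Type u) [CStarAlgebra B], ∀ π : 𝔄 →⋆ₐ[ℂ] B,
      Set.InjOn π (S : Set 𝔄) → Isometry π) := by
  constructor
  · intro hmeet B _ π hinj
    refine NonUnitalStarAlgHom.isometry π ((TwoSidedIdeal.ker_eq_bot π).mp ?_)
    by_contra hker
    obtain ⟨x, hxker, hxS, hx0⟩ := hmeet _ π.isClosed_ker hker
    have hπx : π x = π 0 := by rw [(TwoSidedIdeal.mem_ker π).mp hxker, map_zero]
    exact hx0 (hinj hxS S.zero_mem hπx)
  · intro hiso I hIc hI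
    by_contra! hdisj
    have : IsClosed (I.asIdeal : Set 𝔄) := hIc
    let π := Ideal.Quotient.mkStarAlgHom I.asIdeal
    have hinj : Set.InjOn π S := fun a ha b hb hab =>
      sub_eq_zero.mp (hdisj _ ((Ideal.Quotient.mk_eq_mk_iff_sub_mem a b).mp hab) (sub_mem ha hb))
    obtain ⟨x, hxI, hx0⟩ := SetLike.exists_of_lt (bot_lt_iff_ne_bot.mpr hI)
    have hπx : π x = π 0 := by rw [map_zero]; exact Ideal.Quotient.eq_zero_iff_mem.mpr hxI
    exact hx0 ((TwoSidedIdeal.mem_bot 𝔄).mpr ((hiso _ π hinj).injective hπx))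
end

section
/- Let 𝔄 be a C*-algebra, let (𝔄ᵢ)_{i∈I} be a family of closed star subalgebras of 𝔄, directed under inclusion, whose union is dense in 𝔄, and for each i let Sᵢ ⊆ 𝔄ᵢ be a star subalgebra with Sᵢ ⊆ Sⱼ whenever 𝔄ᵢ ⊆ 𝔄ⱼ. Assume that for every i ∈ I, every *-homomorphism from 𝔄ᵢ into a C*-algebra whose restriction to Sᵢ is injective is injective. Then for every C*-algebra B, every *-homomorphism π : 𝔄 → B whose restriction to the union ⋃ᵢ Sᵢ is injective is injective. -/
/-- Let `𝔄` be a C*-algebra, `(𝔄ᵢ)` a directed family of closed star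
subalgebras with dense union, and `Sᵢ ⊆ 𝔄ᵢ` star subalgebras, compatible with the
inclusions.  If for every `i` each *-homomorphism from `𝔄ᵢ` into a C*-algebra that is
injective on `Sᵢ` is injective, then every *-homomorphism `π : 𝔄 → B` into a C*-algebra
that is injective on `⋃ᵢ Sᵢ` is injective. -/
theorem stmt5 {𝔄 : Type u} [CStarAlgebra 𝔄] {ι : Type*}
    (𝔸 : ι → StarSubalgebra ℂ 𝔄)
    (hclosed : ∀ i, IsClosed ((𝔸 i : Set 𝔄)))
    (hdir : ∀ i j, ∃ k, 𝔸 i ≤ 𝔸 k ∧ 𝔸 j ≤ 𝔸 k)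
    (hdense : Dense (⋃ i, (𝔸 i : Set 𝔄)))
    (S : ι → StarSubalgebra ℂ 𝔄)
    (hS : ∀ i, S i ≤ 𝔸 i)
    (hmono : ∀ i j, 𝔸 i ≤ 𝔸 j → S i ≤ S j)
    (hfib : ∀ i, ∀ (C : Type u) [CStarAlgebra C], ∀ ρ : (𝔸 i) →⋆ₐ[ℂ] C,
      Set.InjOn ρ {x : 𝔸 i | (x : 𝔄) ∈ S i} → Function.Injective ρ)
    (B : Type u) [CStarAlgebra B] (π : 𝔄 →⋆ₐ[ℂ] B)
    (hinj : Set.InjOn π (⋃ i, (S i : Set 𝔄))) :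
    Function.Injective π := by
  -- The norm identity `‖π x‖ = ‖x‖` holds on each `𝔸 i`.
  have key : ∀ x ∈ ⋃ i, (𝔸 i : Set 𝔄), ‖π x‖ = ‖x‖ := by
    rintro x hx
    obtain ⟨_, ⟨i, rfl⟩, hi⟩ := hx
    haveI : IsClosed ((𝔸 i : Set 𝔄)) := hclosed i
    set ρ : (𝔸 i) →⋆ₐ[ℂ] B := π.comp (𝔸 i).subtype with hρ
    have hρinj : Function.Injective ρ := by
      apply hfib i B ρ
      intro a ha b hb hab
      have : (a : 𝔄) = (b : 𝔄) := by
        refine hinj ?_ ?_ hab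
        · exact Set.mem_iUnion.mpr ⟨i, ha⟩
        · exact Set.mem_iUnion.mpr ⟨i, hb⟩
      exact Subtype.ext this
    have := NonUnitalStarAlgHom.norm_map ρ hρinj ⟨x, hi⟩
    simpa [hρ, StarAlgHom.comp_apply] using this
  -- Extend by continuity and density.
  have hcont : Continuous π := by
    haveI := NonUnitalStarAlgHom.instContinuousLinearMapClassComplex
      (F := 𝔄 →⋆ₐ[ℂ] B) (A := 𝔄) (B := B)
    exact map_continuous π
  have hnorm : ∀ x : 𝔄, ‖π x‖ = ‖x‖ := by
    have h1 : Continuous fun x : 𝔄 => ‖π x‖ := hcont.norm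
    have h2 : Continuous fun x : 𝔄 => ‖x‖ := continuous_norm
    have := Continuous.ext_on hdense h1 h2 key
    exact fun x => congrFun this x
  intro a b hab
  have : ‖π (a - b)‖ = ‖a - b‖ := hnorm _
  rw [map_sub, hab, sub_self, norm_zero] at this
  exact sub_eq_zero.mp (norm_eq_zero.mp this.symm) |>.symm |> Eq.symm
end

section
/- Let n ≥ 1 and let g : ℝⁿ → ℂ be an infinitely differentiable ℤⁿ-periodic function. For m ∈ ℤⁿ define the Fourier coefficient c(m) = ∫_{[0,1]ⁿ} g(x) · e^{−2πi (m₁x₁ + ⋯ + mₙxₙ)} dx (Lebesgue integral over the unit cube). Then c is rapidly decaying: for every k ∈ ℕ, the function m ↦ ‖m‖ᵏ · |c(m)| tends to 0 along the cofinite filter on ℤⁿ. -/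
open MeasureTheory Set Submodule Pointwise

namespace Stmt10Aux

variable {n : ℕ}

noncomputable def E (m : Fin n → ℤ) (x : Fin n → ℝ) : ℂ :=
  Complex.exp (-(2 * (Real.pi : ℂ) * Complex.I * ∑ j : Fin n, (m j : ℂ) * (x j : ℂ)))

def D (n : ℕ) : Set (Fin n → ℝ) := Set.pi Set.univ (fun _ : Fin n => Set.Ico (0:ℝ) 1)

lemma measurableSet_D : MeasurableSet (D n) :=
  MeasurableSet.univ_pi fun _ => measurableSet_Ico

lemma D_subset_Icc : D n ⊆ Set.Icc 0 1 := by
  rw [← Set.pi_univ_Icc]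
  exact Set.pi_mono fun i _ => Set.Ico_subset_Icc_self

lemma volume_D : volume (D n) = 1 := by
  rw [D, volume_pi_pi]
  simp

noncomputable def coef (g : (Fin n → ℝ) → ℂ) (m : Fin n → ℤ) : ℂ := ∫ x in D n, g x * E m x

def ej (j : Fin n) : Fin n → ℝ := Pi.single j 1

noncomputable def Dj (j : Fin n) (g : (Fin n → ℝ) → ℂ) : (Fin n → ℝ) → ℂ :=
  fun x => fderiv ℝ g x (ej j)

lemma E_cont (m : Fin n → ℤ) : Continuous (E m) := by
  apply Complex.continuous_exp.comp
  apply Continuous.neg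
  apply Continuous.mul continuous_const
  exact continuous_finset_sum _ fun i _ =>
    (continuous_const.mul ((Complex.continuous_ofReal.comp (continuous_apply i))))

lemma E_abs (m : Fin n → ℤ) (x : Fin n → ℝ) : ‖E m x‖ = 1 := by
  rw [E, Complex.norm_exp]
  have : (∑ j : Fin n, (m j : ℂ) * (x j : ℂ)) = ((∑ j : Fin n, (m j : ℝ) * x j : ℝ) : ℂ) := by
    push_cast; ring
  rw [this]
  simp [Complex.mul_re, Complex.I_re, Complex.I_im]

lemma E_per (m : Fin n → ℤ) (x : Fin n → ℝ) (l : Fin n → ℤ) :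
    E m (x + fun i => (l i : ℝ)) = E m x := by
  rw [E, E]
  have hsum : (∑ j : Fin n, (m j : ℂ) * (((x + fun i => (l i : ℝ)) j : ℝ) : ℂ))
      = (∑ j : Fin n, (m j : ℂ) * (x j : ℂ)) + ((∑ j : Fin n, m j * l j : ℤ) : ℂ) := by
    push_cast
    simp only [Pi.add_apply]
    rw [← Finset.sum_add_distrib]
    congr 1; ext j; push_cast; ring
  rw [hsum]
  rw [mul_add, neg_add, Complex.exp_add]
  have : Complex.exp (-(2 * (Real.pi : ℂ) * Complex.I * ((∑ j : Fin n, m j * l j : ℤ) : ℂ))) = 1 := by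
    rw [show -(2 * (Real.pi : ℂ) * Complex.I * ((∑ j : Fin n, m j * l j : ℤ) : ℂ))
        = ((-(∑ j : Fin n, m j * l j) : ℤ) : ℂ) * (2 * Real.pi * Complex.I) by push_cast; ring]
    exact Complex.exp_int_mul_two_pi_mul_I _
  rw [this, mul_one]

lemma E_shift (m : Fin n → ℤ) (x : Fin n → ℝ) (j : Fin n) (t : ℝ) :
    E m (x + t • ej j) = E m x * Complex.exp (-(2 * (Real.pi:ℂ) * Complex.I * (m j) * t)) := by
  rw [E, E, ← Complex.exp_add]
  congr 1
  have hsum : (∑ i : Fin n, (m i : ℂ) * (((x + t • ej j) i : ℝ) : ℂ))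
      = (∑ i : Fin n, (m i : ℂ) * (x i : ℂ)) + (m j : ℂ) * t := by
    have : ∀ i : Fin n, (m i : ℂ) * (((x + t • ej j) i : ℝ) : ℂ)
        = (m i : ℂ) * (x i : ℂ) + (m i : ℂ) * (if i = j then (t:ℂ) else 0) := by
      intro i
      simp only [Pi.add_apply, Pi.smul_apply, ej, Pi.single_apply, smul_eq_mul]
      by_cases h : i = j <;> simp [h] <;> push_cast <;> ring
    rw [Finset.sum_congr rfl fun i _ => this i, Finset.sum_add_distrib]
    congr 1
    rw [Finset.sum_eq_single j]
    · simp
    · intro b _ hb; simp [hb]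
    · intro h; exact absurd (Finset.mem_univ j) h
  rw [hsum]
  ring


lemma lattice_coords (x : (span ℤ (Set.range (Pi.basisFun ℝ (Fin n)))).toAddSubgroup) :
    ∃ m : Fin n → ℤ, (x : Fin n → ℝ) = fun i => (m i : ℝ) := by
  obtain ⟨x, hx⟩ := x
  rw [Submodule.mem_toAddSubgroup] at hx
  rw [Module.Basis.mem_span_iff_repr_mem] at hx
  simp only [Pi.basisFun_repr, Algebra.mem_bot] at hx
  choose m hm using hx
  exact ⟨m, by ext i; exact (hm i).symm⟩

lemma transl_inv (h : (Fin n → ℝ) → ℂ)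
    (hper : ∀ (x : Fin n → ℝ) (m : Fin n → ℤ), h (x + fun i => (m i : ℝ)) = h x)
    (v : Fin n → ℝ) :
    ∫ x in D n, h (x + v) = ∫ x in D n, h x := by
  set L := (span ℤ (Set.range (Pi.basisFun ℝ (Fin n)))).toAddSubgroup
  have hfd : IsAddFundamentalDomain L (D n) volume := by
    have := ZSpan.isAddFundamentalDomain' (Pi.basisFun ℝ (Fin n)) (volume : Measure (Fin n → ℝ))
    rwa [ZSpan.fundamentalDomain_pi_basisFun] at this
  have hfd2 : IsAddFundamentalDomain L (v +ᵥ D n) volume := hfd.vadd_of_comm v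
  have hinv : ∀ (l : L) (x : Fin n → ℝ), h (l +ᵥ x) = h x := by
    intro l x
    obtain ⟨m, hm⟩ := lattice_coords l
    show h ((l : Fin n → ℝ) +ᵥ x) = h x
    rw [vadd_eq_add, add_comm, hm]
    exact hper x m
  have step1 : ∫ x in D n, h (x + v) = ∫ x in v +ᵥ D n, h x := by
    have mp : MeasurePreserving (fun x : Fin n → ℝ => x + v) volume volume :=
      measurePreserving_add_right volume v
    have me : MeasurableEmbedding (fun x : Fin n → ℝ => x + v) :=
      (MeasurableEquiv.addRight v).measurableEmbedding
    have := mp.setIntegral_preimage_emb me h (v +ᵥ D n)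
    rw [← this]
    have hset : (fun x : Fin n → ℝ => x + v) ⁻¹' (v +ᵥ D n) = D n := by
      ext x
      simp only [Set.mem_preimage, Set.mem_vadd_set_iff_neg_vadd_mem, vadd_eq_add]
      rw [show -v + (x + v) = x by abel]
    rw [hset]
  have : Countable L := by
    have : Countable (span ℤ (Set.range (Pi.basisFun ℝ (Fin n)))) := inferInstance
    exact this
  rw [step1]
  exact hfd2.setIntegral_eq hfd hinv

lemma integral_Icc_eq_D (f : (Fin n → ℝ) → ℂ) :
    ∫ x in Set.Icc (0 : Fin n → ℝ) 1, f x = ∫ x in D n, f x := by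
  apply setIntegral_congr_set
  rw [← Set.pi_univ_Icc, volume_pi]
  exact MeasureTheory.Measure.pi_Ico_ae_eq_pi_Icc.symm

lemma Dj_contDiff {g : (Fin n → ℝ) → ℂ} (hg : ContDiff ℝ (⊤ : ℕ∞) g) (j : Fin n) :
    ContDiff ℝ (⊤ : ℕ∞) (Dj j g) :=
  (hg.fderiv_right (by simp)).clm_apply contDiff_const

lemma Dj_per {g : (Fin n → ℝ) → ℂ}
    (hg : ContDiff ℝ (⊤ : ℕ∞) g)
    (hper : ∀ (x : Fin n → ℝ) (m : Fin n → ℤ), g (x + fun i => (m i : ℝ)) = g x)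
    (j : Fin n) :
    ∀ (x : Fin n → ℝ) (m : Fin n → ℤ), Dj j g (x + fun i => (m i : ℝ)) = Dj j g x := by
  intro x m
  set v : Fin n → ℝ := fun i => (m i : ℝ)
  have key : fderiv ℝ g (x + v) = fderiv ℝ g x := by
    have h1 : HasFDerivAt (fun y : Fin n → ℝ => y + v) (ContinuousLinearMap.id ℝ _) x :=
      (hasFDerivAt_id x).add_const v
    have h2 := (((hg.differentiable (by simp)) (x + v)).hasFDerivAt.comp x h1).fderiv
    have h3 : (fun y : Fin n → ℝ => g (y + v)) = g := funext fun y => hper y m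
    rw [ContinuousLinearMap.comp_id] at h2
    rw [← h2, Function.comp_def, h3]
  simp only [Dj, key]

lemma cont_integrable {f : (Fin n → ℝ) → ℂ} (hf : Continuous f) :
    Integrable f (volume.restrict (D n)) := by
  have h1 : IntegrableOn f (Set.Icc (0 : Fin n → ℝ) 1) volume :=
    hf.continuousOn.integrableOn_compact isCompact_Icc
  exact h1.mono_set D_subset_Icc

lemma g_E_per {g : (Fin n → ℝ) → ℂ}
    (hper : ∀ (x : Fin n → ℝ) (m : Fin n → ℤ), g (x + fun i => (m i : ℝ)) = g x)
    (m : Fin n → ℤ) :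
    ∀ (x : Fin n → ℝ) (l : Fin n → ℤ),
      (fun y => g y * E m y) (x + fun i => (l i : ℝ)) = (fun y => g y * E m y) x := by
  intro x l
  simp only
  rw [hper x l, E_per]

lemma coef_Dj {g : (Fin n → ℝ) → ℂ} (hg : ContDiff ℝ (⊤ : ℕ∞) g)
    (hper : ∀ (x : Fin n → ℝ) (m : Fin n → ℤ), g (x + fun i => (m i : ℝ)) = g x)
    (m : Fin n → ℤ) (j : Fin n) :
    coef (Dj j g) m = (2 * (Real.pi : ℂ) * Complex.I * (m j)) * coef g m := by
  classical
  set μ : Measure (Fin n → ℝ) := volume.restrict (D n) with hμ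
  haveI : IsFiniteMeasure μ := by
    constructor
    rw [hμ, Measure.restrict_apply_univ, volume_D]
    exact ENNReal.one_lt_top
  set F : ℝ → (Fin n → ℝ) → ℂ := fun t x => g (x + t • ej j) * E m x with hF
  set F' : ℝ → (Fin n → ℝ) → ℂ := fun t x => Dj j g (x + t • ej j) * E m x with hF'
  have hDgc : Continuous (Dj j g) := (Dj_contDiff hg j).continuous
  -- bound on compact set
  set K : Set (Fin n → ℝ) := Set.Icc (fun _ => (-1 : ℝ)) (fun _ => 2) with hK
  obtain ⟨C, hC⟩ := (isCompact_Icc (α := Fin n → ℝ)).exists_bound_of_continuousOn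
    (f := Dj j g) hDgc.continuousOn
  have hmemK : ∀ x ∈ D n, ∀ t ∈ Metric.ball (0:ℝ) 1, x + t • ej j ∈ K := by
    intro x hx t ht
    have hxi : ∀ i, x i ∈ Set.Ico (0:ℝ) 1 := fun i => hx i (Set.mem_univ i)
    have htt : -1 < t ∧ t < 1 := abs_lt.1 (by simpa [Real.norm_eq_abs] using ht)
    have hbnd : ∀ i, -1 ≤ x i + t * (ej j) i ∧ x i + t * (ej j) i ≤ 2 := by
      intro i
      have h1 := (hxi i).1
      have h2 := (hxi i).2
      have : (ej j) i = 0 ∨ (ej j) i = 1 := by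
        rw [ej, Pi.single_apply]; by_cases h : i = j <;> simp [h]
      rcases this with h | h <;> rw [h] <;> constructor <;> nlinarith [htt.1, htt.2]
    rw [hK, Set.mem_Icc]
    constructor <;> rw [Pi.le_def] <;> intro i <;>
      simp only [Pi.add_apply, Pi.smul_apply, smul_eq_mul]
    · exact (hbnd i).1
    · exact (hbnd i).2
  -- derivative of the parametrized integrand
  have h_diff : ∀ (x : Fin n → ℝ), ∀ t : ℝ,
      HasDerivAt (fun s => F s x) (F' t x) t := by
    intro x t
    have hline : HasDerivAt (fun s : ℝ => x + s • ej j) (ej j) t := by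
      simpa using ((hasDerivAt_id t).smul_const (ej j)).const_add x
    have hcomp := (((hg.differentiable (by simp)) (x + t • ej j)).hasFDerivAt.comp_hasDerivAt
      t hline)
    exact hcomp.mul_const (E m x)
  have key := hasDerivAt_integral_of_dominated_loc_of_deriv_le (μ := μ)
    (F := F) (F' := F') (x₀ := (0:ℝ)) (bound := fun _ => |C|) (s := Metric.ball 0 1) (Metric.ball_mem_nhds _ one_pos)
    (Filter.Eventually.of_forall fun t =>
      ((hg.continuous.comp (continuous_id.add continuous_const)).mul (E_cont m)).aestronglyMeasurable)
    (cont_integrable ((hg.continuous.comp (continuous_id.add continuous_const)).mul (E_cont m)))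
    ((hDgc.comp (continuous_id.add continuous_const)).mul (E_cont m)).aestronglyMeasurable
    (by
      rw [hμ, ae_restrict_iff' measurableSet_D]
      refine Filter.Eventually.of_forall fun x hx => fun t ht => ?_
      have h1 : ‖F' t x‖ = ‖Dj j g (x + t • ej j)‖ * ‖E m x‖ := norm_mul _ _
      have h2 : ‖E m x‖ = 1 := by rw [E_abs]
      rw [h1, h2, mul_one]
      exact le_trans (hC _ (hmemK x hx t ht)) (le_abs_self C))
    (integrable_const _)
    (Filter.Eventually.of_forall fun x => fun t _ => h_diff x t)
  obtain ⟨-, hderiv⟩ := key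
  -- identify the function with an explicit exponential
  have hfun : (fun t : ℝ => ∫ x, F t x ∂μ)
      = fun t : ℝ => Complex.exp (2 * (Real.pi : ℂ) * Complex.I * (m j) * t) * coef g m := by
    funext t
    have hx : ∀ x : Fin n → ℝ, F t x
        = ((fun y => g y * E m y) (x + t • ej j)) *
            Complex.exp (2 * (Real.pi : ℂ) * Complex.I * (m j) * t) := by
      intro x
      rw [hF]
      simp only
      rw [E_shift m x j t, ← mul_assoc]
      rw [mul_assoc (g (x + t • ej j) * E m x), ← Complex.exp_add, neg_add_cancel,
        Complex.exp_zero, mul_one]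
    calc ∫ x, F t x ∂μ
        = ∫ x in D n, ((fun y => g y * E m y) (x + t • ej j)) *
            Complex.exp (2 * (Real.pi : ℂ) * Complex.I * (m j) * t) := by
          rw [hμ]; exact setIntegral_congr_fun measurableSet_D fun x _ => hx x
      _ = (∫ x in D n, (fun y => g y * E m y) (x + t • ej j)) *
            Complex.exp (2 * (Real.pi : ℂ) * Complex.I * (m j) * t) := by
          rw [integral_mul_const]
      _ = _ := by
          have htr := transl_inv (fun y => g y * E m y) (g_E_per hper m) (t • ej j)
          rw [htr, coef]; ring
  -- derivative of the exponential side
  have hrhs : HasDerivAt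
      (fun t : ℝ => Complex.exp (2 * (Real.pi : ℂ) * Complex.I * (m j) * t) * coef g m)
      ((2 * (Real.pi : ℂ) * Complex.I * (m j)) * coef g m) 0 := by
    have hinner : HasDerivAt (fun z : ℂ => 2 * (Real.pi : ℂ) * Complex.I * (m j) * z)
        (2 * (Real.pi : ℂ) * Complex.I * (m j)) ((0:ℝ) : ℂ) := by
      simpa using (hasDerivAt_id (((0:ℝ):ℂ))).const_mul (2 * (Real.pi : ℂ) * Complex.I * (m j))
    have hexp := (Complex.hasDerivAt_exp _).comp (((0:ℝ):ℂ)) hinner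
    have := (hexp.comp_ofReal).mul_const (coef g m)
    simpa using this
  rw [hfun] at hderiv
  have huniq := hderiv.unique hrhs
  have : ∫ x, F' 0 x ∂μ = coef (Dj j g) m := by
    rw [hμ, coef]
    apply setIntegral_congr_fun measurableSet_D
    intro x _
    rw [hF']
    simp
  rw [← this, huniq]

lemma iter_props {g : (Fin n → ℝ) → ℂ} (hg : ContDiff ℝ (⊤ : ℕ∞) g)
    (hper : ∀ (x : Fin n → ℝ) (m : Fin n → ℤ), g (x + fun i => (m i : ℝ)) = g x)
    (j : Fin n) : ∀ k : ℕ,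
    ContDiff ℝ (⊤ : ℕ∞) ((Dj j)^[k] g) ∧
      (∀ (x : Fin n → ℝ) (m : Fin n → ℤ), (Dj j)^[k] g (x + fun i => (m i : ℝ)) = (Dj j)^[k] g x) := by
  intro k
  induction k with
  | zero => exact ⟨hg, hper⟩
  | succ k ih =>
      rw [Function.iterate_succ_apply']
      exact ⟨Dj_contDiff ih.1 j, Dj_per ih.1 ih.2 j⟩

lemma coef_iter {g : (Fin n → ℝ) → ℂ} (hg : ContDiff ℝ (⊤ : ℕ∞) g)
    (hper : ∀ (x : Fin n → ℝ) (m : Fin n → ℤ), g (x + fun i => (m i : ℝ)) = g x)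
    (m : Fin n → ℤ) (j : Fin n) : ∀ k : ℕ,
    coef ((Dj j)^[k] g) m = (2 * (Real.pi : ℂ) * Complex.I * (m j)) ^ k * coef g m := by
  intro k
  induction k with
  | zero => simp
  | succ k ih =>
      rw [Function.iterate_succ_apply',
        coef_Dj (iter_props hg hper j k).1 (iter_props hg hper j k).2 m j, ih, pow_succ]
      ring

lemma coef_abs_le {h : (Fin n → ℝ) → ℂ} (hcont : Continuous h) {C : ℝ}
    (hC : ∀ x ∈ Set.Icc (0 : Fin n → ℝ) 1, ‖h x‖ ≤ C) (m : Fin n → ℤ) :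
    ‖coef h m‖ ≤ C := by
  have hvol : volume (D n) < ⊤ := by rw [volume_D]; exact ENNReal.one_lt_top
  have hle : ∀ x ∈ D n, ‖h x * E m x‖ ≤ C := by
    intro x hx
    rw [norm_mul, show ‖E m x‖ = 1 from by rw [E_abs], mul_one]
    exact hC x (D_subset_Icc hx)
  have hmeas : AEStronglyMeasurable (fun x => h x * E m x) (volume.restrict (D n)) :=
    (hcont.mul (E_cont m)).aestronglyMeasurable
  have := norm_setIntegral_le_of_norm_le_const hvol hle
  rw [measureReal_def, volume_D] at this
  simpa [coef] using this

lemma norm_tendsto (n : ℕ) :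
    Filter.Tendsto (fun m : Fin n → ℤ => ‖(fun i => (m i : ℝ) : Fin n → ℝ)‖)
      Filter.cofinite Filter.atTop := by
  rw [Filter.tendsto_atTop]
  intro b
  rw [Filter.eventually_cofinite]
  have hsub : {m : Fin n → ℤ | ¬ b ≤ ‖(fun i => (m i : ℝ) : Fin n → ℝ)‖}
      ⊆ Set.pi Set.univ (fun _ : Fin n => Set.Icc (-⌈b⌉) ⌈b⌉) := by
    intro m hm i _
    simp only [Set.mem_setOf_eq, not_le] at hm
    have h1 : |(m i : ℝ)| ≤ ‖(fun i => (m i : ℝ) : Fin n → ℝ)‖ := by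
      simpa [Real.norm_eq_abs] using norm_le_pi_norm (fun i => (m i : ℝ)) i
    have h3 := abs_lt.1 (lt_of_le_of_lt h1 hm)
    constructor
    · have h4 : (-⌈b⌉ : ℝ) ≤ (m i : ℝ) := le_trans (by simpa using neg_le_neg (Int.le_ceil b)) h3.1.le
      exact_mod_cast h4
    · have h4 : (m i : ℝ) ≤ (⌈b⌉ : ℝ) := le_trans h3.2.le (Int.le_ceil b)
      exact_mod_cast h4
  exact Set.Finite.subset (Set.Finite.pi fun _ => Set.finite_Icc _ _) hsub

end Stmt10Aux

open MeasureTheory in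
/-- The Fourier coefficients
`c(m) = ∫_{[0,1]ⁿ} g(x) e^{−2πi (m₁x₁ + ⋯ + mₙxₙ)} dx` of a smooth `ℤⁿ`-periodic
function `g : ℝⁿ → ℂ` are rapidly decaying. -/
theorem stmt10 (n : ℕ) (hn : 1 ≤ n) (g : (Fin n → ℝ) → ℂ)
    (hg : ContDiff ℝ (⊤ : ℕ∞) g)
    (hper : ∀ (x : Fin n → ℝ) (m : Fin n → ℤ), g (x + fun i => (m i : ℝ)) = g x)
    (c : (Fin n → ℤ) → ℂ)
    (hc : ∀ m : Fin n → ℤ,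
      c m = ∫ x in Set.Icc (0 : Fin n → ℝ) 1,
        g x * Complex.exp (-(2 * (Real.pi : ℂ) * Complex.I *
          ∑ j : Fin n, (m j : ℂ) * (x j : ℂ)))) :
    ∀ k : ℕ,
      Filter.Tendsto
        (fun m : Fin n → ℤ => ‖(fun i => (m i : ℝ) : Fin n → ℝ)‖ ^ k * ‖c m‖)
        Filter.cofinite (nhds 0) := by
  intro k
  classical
  haveI : Nonempty (Fin n) := ⟨⟨0, hn⟩⟩
  have hcm : ∀ m : Fin n → ℤ, c m = Stmt10Aux.coef g m := by
    intro m
    rw [hc m, Stmt10Aux.integral_Icc_eq_D]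
    rfl
  have hbnd : ∀ j : Fin n, ∃ C : ℝ, ∀ x ∈ Set.Icc (0 : Fin n → ℝ) 1,
      ‖(Stmt10Aux.Dj j)^[k+1] g x‖ ≤ C := by
    intro j
    exact (isCompact_Icc (α := Fin n → ℝ) (a := 0) (b := 1)).exists_bound_of_continuousOn
      ((Stmt10Aux.iter_props hg hper j (k+1)).1.continuous.continuousOn)
  choose C hC using hbnd
  set B : ℝ := ∑ j : Fin n, |C j| with hB
  have hBnonneg : 0 ≤ B := Finset.sum_nonneg fun j _ => abs_nonneg _
  have hCB : ∀ j, C j ≤ B := fun j =>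
    le_trans (le_abs_self _)
      (Finset.single_le_sum (f := fun j => |C j|) (fun i _ => abs_nonneg _) (Finset.mem_univ j))
  have key : ∀ m : Fin n → ℤ, m ≠ 0 →
      ‖(fun i => (m i : ℝ) : Fin n → ℝ)‖ ^ k * ‖c m‖
        ≤ B / ‖(fun i => (m i : ℝ) : Fin n → ℝ)‖ := by
    intro m hm
    set r : ℝ := ‖(fun i => (m i : ℝ) : Fin n → ℝ)‖ with hr
    obtain ⟨j, -, hj⟩ := Finset.exists_max_image (Finset.univ : Finset (Fin n))
      (fun j => |(m j : ℝ)|) Finset.univ_nonempty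
    have hrj : r = |(m j : ℝ)| := by
      apply le_antisymm
      · apply (pi_norm_le_iff_of_nonneg (abs_nonneg _)).2
        intro i
        simpa [Real.norm_eq_abs] using hj i (Finset.mem_univ i)
      · simpa [Real.norm_eq_abs] using norm_le_pi_norm (fun i => (m i : ℝ)) j
    have hr1 : 1 ≤ r := by
      obtain ⟨i, hi⟩ := Function.ne_iff.1 hm
      have h1 : (1 : ℤ) ≤ |m i| := Int.one_le_abs (by simpa using hi)
      have h2 : (1 : ℝ) ≤ |(m i : ℝ)| := by
        rw [← Int.cast_abs]; exact_mod_cast h1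
      exact le_trans h2 (by rw [hrj]; exact hj i (Finset.mem_univ i))
    have hrpos : 0 < r := lt_of_lt_of_le one_pos hr1
    have hiter := Stmt10Aux.coef_iter hg hper m j (k+1)
    have hfac : ‖2 * (Real.pi : ℂ) * Complex.I * ((m j : ℤ) : ℂ)‖
        = 2 * Real.pi * r := by
      rw [hrj]
      rw [norm_mul, norm_mul, norm_mul]
      rw [Complex.norm_two, Complex.norm_real, Real.norm_eq_abs, Complex.norm_I, Complex.norm_intCast]
      rw [abs_of_nonneg Real.pi_pos.le, mul_one]
    have habs : ‖Stmt10Aux.coef ((Stmt10Aux.Dj j)^[k+1] g) m‖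
        = (2 * Real.pi * r) ^ (k+1) * ‖Stmt10Aux.coef g m‖ := by
      rw [hiter, norm_mul, norm_pow, hfac]
    have hGle : ‖Stmt10Aux.coef ((Stmt10Aux.Dj j)^[k+1] g) m‖ ≤ B :=
      le_trans (Stmt10Aux.coef_abs_le
        (Stmt10Aux.iter_props hg hper j (k+1)).1.continuous (hC j) m) (hCB j)
    have hpow : r ^ (k+1) ≤ (2 * Real.pi * r) ^ (k+1) := by
      apply pow_le_pow_left₀ hrpos.le
      nlinarith [Real.pi_gt_three]
    rw [le_div_iff₀ hrpos]
    calc r ^ k * ‖c m‖ * r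
        = r ^ (k+1) * ‖Stmt10Aux.coef g m‖ := by
          rw [hcm m, pow_succ]; ring
      _ ≤ (2 * Real.pi * r) ^ (k+1) * ‖Stmt10Aux.coef g m‖ :=
          mul_le_mul_of_nonneg_right hpow (norm_nonneg _)
      _ = ‖Stmt10Aux.coef ((Stmt10Aux.Dj j)^[k+1] g) m‖ := habs.symm
      _ ≤ B := hGle
  have hev : ∀ᶠ m : Fin n → ℤ in Filter.cofinite,
      ‖(fun i => (m i : ℝ) : Fin n → ℝ)‖ ^ k * ‖c m‖
        ≤ B / ‖(fun i => (m i : ℝ) : Fin n → ℝ)‖ := by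
    rw [Filter.eventually_cofinite]
    apply Set.Finite.subset (Set.finite_singleton (0 : Fin n → ℤ))
    intro m hm
    rw [Set.mem_singleton_iff]
    by_contra hne
    exact hm (key m hne)
  exact squeeze_zero' (Filter.Eventually.of_forall fun m => by positivity) hev
    (Filter.Tendsto.div_atTop (tendsto_const_nhds) (Stmt10Aux.norm_tendsto n))
end

section
/- Let A be a finitely generated abelian group, let T be its torsion subgroup (which is finite), and let o = |T| be its order. Let B be the intersection of all subgroups of A of index o. Then B is a characteristic subgroup of A of finite index, and B is torsion-free, i.e. B ∩ T = {1} (equivalently, the only element of B of finite order is the identity). -/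
/-!
Since `A ⧸ T` is finitely generated and torsion-free, it is free, so the projection `A → A ⧸ T`
splits and `T` is a retract of `A`. The kernel of a retraction `r : A →* T` has index `|T|` and
meets `T` trivially, so `B ≤ ker r` is torsion-free. Being a quotient of `A`, `T` is a finitely
generated torsion group, hence finite. `B` contains the `o`-th powers (every subgroup of index `o`
does), which form a subgroup of finite index; and automorphisms permute the subgroups of
index `o`.
-/

open Function

theorem MonoidHom.exists_rightInverse_of_isMulTorsionFree {G Q : Type*} [CommGroup G]
    [CommGroup Q] [Group.FG Q] [IsMulTorsionFree Q] (f : G →* Q) (hf : Surjective f) :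
    ∃ s : Q →* G, RightInverse s f := by
  obtain ⟨s, hs⟩ := Module.projective_lifting_property f.toAdditive.toIntLinearMap LinearMap.id hf
  exact ⟨MonoidHom.toAdditive.symm s.toAddMonoidHom, fun q => congr($hs (Additive.ofMul q))⟩

namespace Subgroup

variable {G : Type*} [Group G]

theorem characteristic_iInf_index_eq (n : ℕ) :
    (⨅ (H : Subgroup G) (_ : H.index = n), H).Characteristic := by
  refine characteristic_iff_le_comap.mpr fun ϕ x hx => ?_
  simp only [mem_comap, mem_iInf] at hx ⊢
  exact fun H hH =>
    hx (H.comap ϕ.toMonoidHom) ((index_comap_of_surjective H ϕ.surjective).trans hH)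

theorem index_ker_eq_card_of_leftInverse {N : Subgroup G} {r : G →* N}
    (hr : LeftInverse r N.subtype) : r.ker.index = Nat.card N := by
  rw [index_ker, MonoidHom.range_eq_top.mpr hr.surjective, card_top]

theorem disjoint_ker_of_leftInverse {N : Subgroup G} {r : G →* N}
    (hr : LeftInverse r N.subtype) : Disjoint r.ker N := by
  refine disjoint_def.mpr fun {x} hxr hxN => ?_
  have : (⟨x, hxN⟩ : N) = 1 := (hr ⟨x, hxN⟩).symm.trans hxr
  exact congr_arg Subtype.val this

end Subgroup

theorem Subgroup.finiteIndex_iInf_index_eq {G : Type*} [CommGroup G] [Group.FG G] {n : ℕ}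
    (hn : n ≠ 0) : (⨅ (H : Subgroup G) (_ : H.index = n), H).FiniteIndex := by
  have := Subgroup.finiteIndex_range_powMonoidHom_of_fg G hn
  refine Subgroup.finiteIndex_of_le (H := (powMonoidHom n).range) (le_iInf₂ fun H hH => ?_)
  rintro _ ⟨g, rfl⟩
  exact hH ▸ H.pow_index_mem g

namespace CommGroup

variable {G : Type*} [CommGroup G]

theorem exists_leftInverse_subtype_of_rightInverse_mk' {N : Subgroup G} {s : G ⧸ N →* G}
    (hs : RightInverse s (QuotientGroup.mk' N)) : ∃ r : G →* N, LeftInverse r N.subtype := by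
  refine ⟨(MonoidHom.id G / s.comp (QuotientGroup.mk' N)).codRestrict N fun g => ?_,
    fun n => Subtype.ext ?_⟩
  · rw [← QuotientGroup.eq_one_iff, MonoidHom.div_apply, QuotientGroup.mk_div]
    exact div_eq_one.mpr (hs g).symm
  · simp [(QuotientGroup.eq_one_iff _).mpr n.2]

variable [Group.FG G]

theorem exists_leftInverse_subtype_torsion :
    ∃ r : G →* torsion G, LeftInverse r (torsion G).subtype := by
  obtain ⟨s, hs⟩ := (QuotientGroup.mk' (torsion G)).exists_rightInverse_of_isMulTorsionFree
    (QuotientGroup.mk'_surjective _)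
  exact exists_leftInverse_subtype_of_rightInverse_mk' hs

theorem finite_torsion : Finite (torsion G) := by
  obtain ⟨r, hr⟩ := exists_leftInverse_subtype_torsion (G := G)
  have : Group.FG (torsion G) := Group.fg_of_surjective hr.surjective
  exact finite_of_fg_isMulTorsion _ fun t => Submonoid.isOfFinOrder_coe.mp t.2

end CommGroup

/-- Let `A` be a finitely generated abelian group with torsion
subgroup `T` of order `o`.  Then the intersection `B` of all subgroups of `A` of index
`o` is a characteristic subgroup of finite index, and `B` is torsion-free, i.e.
`B ⊓ T = ⊥`. -/
theorem stmt13 {A : Type*} [CommGroup A] (hfg : Group.FG A)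
    (o : ℕ) (ho : o = Nat.card (CommGroup.torsion A))
    (B : Subgroup A) (hB : B = ⨅ (H : Subgroup A) (_ : H.index = o), H) :
    B.Characteristic ∧ B.FiniteIndex ∧ B ⊓ CommGroup.torsion A = ⊥ := by
  obtain ⟨r, hr⟩ := CommGroup.exists_leftInverse_subtype_torsion (G := A)
  have : Finite (CommGroup.torsion A) := CommGroup.finite_torsion
  have ho₀ : o ≠ 0 := ho ▸ Nat.card_pos.ne'
  have hBr : B ≤ r.ker :=
    hB ▸ iInf₂_le r.ker ((Subgroup.index_ker_eq_card_of_leftInverse hr).trans ho.symm)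
  subst hB
  exact ⟨Subgroup.characteristic_iInf_index_eq o, Subgroup.finiteIndex_iInf_index_eq ho₀,
    disjoint_iff.mp ((Subgroup.disjoint_ker_of_leftInverse hr).mono_left hBr)⟩
end

section
/- Let G be a finitely generated group and let i ≥ 1 be a natural number. Then the intersection of all subgroups of G of index i is a characteristic subgroup of G of finite index. -/
open Subgroup

/-- homs from an FG group to a finite group form a finite type -/
lemma homFinite {G P : Type*} [Group G] [Group P] [Finite P] (hfg : Group.FG G) :
    Finite (G →* P) := by
  obtain ⟨T, hT⟩ := hfg.out
  refine Finite.of_injective (fun f => fun t : (T : Set G) => f t) ?_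
  intro f g h
  exact MonoidHom.eq_of_eqOn_dense hT (fun x hx => congrFun h ⟨x, hx⟩)

lemma setFinite {G : Type*} [Group G] (hfg : Group.FG G) (i : ℕ) (hi : 1 ≤ i) :
    {H : Subgroup G | H.index = i}.Finite := by
  have : Finite (G →* Equiv.Perm (Fin i)) := homFinite hfg
  have key : ∀ H ∈ {H : Subgroup G | H.index = i},
      ∃ (p : (G →* Equiv.Perm (Fin i)) × Fin i),
        H = (MulAction.stabilizer (Equiv.Perm (Fin i)) p.2).comap p.1 := by
    intro H hH
    have hcard : Nat.card (G ⧸ H) = i := by rw [← Subgroup.index_eq_card]; exact hH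
    have hfin : Finite (G ⧸ H) := Nat.finite_of_card_ne_zero (by omega)
    let e : G ⧸ H ≃ Fin i := Finite.equivFinOfCardEq hcard
    let φ : G →* Equiv.Perm (Fin i) :=
      { toFun := fun g => e.permCongr (MulAction.toPermHom G (G ⧸ H) g)
        map_one' := by ext x; simp
        map_mul' := by intro g h; ext x; simp [mul_smul] }
    refine ⟨⟨φ, e ((1 : G) : G ⧸ H)⟩, ?_⟩
    ext g
    simp only [Subgroup.mem_comap, MulAction.mem_stabilizer_iff]
    show g ∈ H ↔ φ g • e ((1 : G) : G ⧸ H) = e ((1 : G) : G ⧸ H)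
    have : φ g • e ((1 : G) : G ⧸ H) = e (g • ((1 : G) : G ⧸ H)) := by
      simp [φ, Equiv.permCongr_apply]
    rw [this, e.apply_eq_iff_eq]
    rw [show g • ((1 : G) : G ⧸ H) = ((g : G) : G ⧸ H) by
      rw [show ((1:G) : G ⧸ H) = QuotientGroup.mk 1 from rfl]
      rw [MulAction.Quotient.smul_mk, smul_eq_mul, mul_one]]
    rw [QuotientGroup.eq]
    simp
  choose f hf using key
  have : {H : Subgroup G | H.index = i} ⊆
      Set.range (fun p : (G →* Equiv.Perm (Fin i)) × Fin i =>
        (MulAction.stabilizer (Equiv.Perm (Fin i)) p.2).comap p.1) := by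
    intro H hH
    exact ⟨f H hH, (hf H hH).symm⟩
  exact Set.Finite.subset (Set.finite_range _) this

lemma mapIndex {G : Type*} [Group G] (φ : G ≃* G) (H : Subgroup G) :
    (H.map φ.toMonoidHom).index = H.index := by
  rw [← Subgroup.index_comap_of_surjective _ (show Function.Surjective φ.toMonoidHom from φ.surjective),
    Subgroup.comap_map_eq_self_of_injective φ.injective]

/-- For a finitely generated group `G` and `i ≥ 1`, the intersection
of all subgroups of `G` of index `i` is a characteristic subgroup of finite index. -/
theorem stmt14 {G : Type*} [Group G] (hfg : Group.FG G) (i : ℕ) (hi : 1 ≤ i)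
    (B : Subgroup G) (hB : B = ⨅ (H : Subgroup G) (_ : H.index = i), H) :
    B.Characteristic ∧ B.FiniteIndex := by
  constructor
  · rw [Subgroup.characteristic_iff_comap_eq]
    intro φ
    subst hB
    ext g
    simp only [Subgroup.mem_comap, Subgroup.mem_iInf]
    constructor
    · intro h H hH
      have h1 : (H.map φ.toMonoidHom).index = i := by rw [mapIndex]; exact hH
      have h2 := h _ h1
      rcases Subgroup.mem_map.mp h2 with ⟨x, hx, hxe⟩
      rwa [← φ.injective hxe]
    · intro h H hH
      have h1 : (H.comap φ.toMonoidHom).index = i := by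
        rw [Subgroup.index_comap_of_surjective _ (show Function.Surjective φ.toMonoidHom from φ.surjective)]; exact hH
      exact h _ h1
  · have hS : {H : Subgroup G | H.index = i}.Finite := setFinite hfg i hi
    have hfin : Finite {H : Subgroup G // H.index = i} := hS
    have : B = ⨅ (H : {H : Subgroup G // H.index = i}), (H : Subgroup G) := by
      rw [hB, iInf_subtype]
    rw [this]
    apply Subgroup.finiteIndex_iInf
    intro H
    exact ⟨by rw [H.2]; omega⟩
end
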